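/- arXiv:2305.19791 — 2 statements merged into one kernel-verified Lean document; each statement's English description precedes it below -/
import Mathlib

section
/- The special L²-admissible pair associated to an exotic pair (Lemma 4.10 of the paper): Let d ≥ 2 be an integer, σ ∈ [d/(2d−1), 1), α ∈ (4σ/d, 4σ/(d+1−2σ)), and let 𝔞, 𝔯 ∈ (2, ∞) satisfy 2σ/𝔞 + d/𝔯 = 2σ/α and 𝔯 > α(α+1)d/((α+2)σ). Define ã := 4σ𝔯/(αd) and r̃ := 2𝔯/(𝔯 − α) (note 𝔯 > α so r̃ is well defined). Then: ã, r̃ ∈ (2, ∞); the pair is L²-admissible, i.e. 2σ/ã + d/r̃ = d/2; ã > max{2, ã′}; 1/ã′ = α/𝔞 + 1/ã; 1/r̃′ = α/𝔯 + 1/r̃; 1/ã ≤ ((2d−1)/2)·(1/2 − 1/r̃); and (ã, r̃) ≠ (2, (4d−2)/(2d−3)). In fact, for these ã, r̃ the inequality 1/ã ≤ ((2d−1)/2)·(1/2 − 1/r̃) holds if and only if σ ≥ d/(2d−1). -/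
/-!
Everything is explicit algebra in the reciprocals `1/ã = αd/(4σ𝔯)` and `1/2 - 1/r̃ = α/(2𝔯)`.
Since `𝔞 > 0`, the relation `2σ/𝔞 + d/𝔯 = 2σ/α` gives `d/𝔯 < 2σ/α`, which is exactly `ã > 2`, and
together with `2σ < d` also `𝔯 > α`, i.e. `r̃ > 2`. The admissibility and Hölder relations are
then linear identities in these reciprocals, and the last inequality reduces to `d/σ ≤ 2d - 1`.
-/

/-- The Hölder conjugate exponent of `r`, defined by `1/r + 1/r' = 1`, i.e. `r' = r/(r-1)`. -/
noncomputable def conjExp (r : ℝ) : ℝ := r / (r - 1)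

lemma one_div_conjExp {p : ℝ} (hp : 1 < p) : 1 / conjExp p = 1 - 1 / p := by
  show 1 / Real.conjExponent p = 1 - 1 / p
  simpa only [one_div] using ((Real.HolderConjugate.conjExponent hp).one_sub_inv).symm

lemma conjExp_lt_self {p : ℝ} (hp : 2 < p) : conjExp p < p := by
  rw [conjExp, div_lt_iff₀ (by linarith)]
  nlinarith

/-- The exponent `ã` of the paper. -/
noncomputable def specialTimeExp (d σ α r : ℝ) : ℝ := 4 * σ * r / (α * d)

/-- The exponent `r̃` of the paper. -/
noncomputable def specialSpaceExp (α r : ℝ) : ℝ := 2 * r / (r - α)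

section SpecialPair

variable {d σ α a r : ℝ}

lemma div_lt_two_mul_div_of_exotic (hσ : 0 < σ) (ha : 0 < a)
    (hadm : 2 * σ / a + d / r = 2 * σ / α) : d / r < 2 * σ / α := by
  have : 0 < 2 * σ / a := by positivity
  linarith

lemma lt_of_div_lt_two_mul_div (hσ : 0 < σ) (hd : 2 * σ ≤ d) (hα : 0 < α) (hr : 0 < r)
    (h : d / r < 2 * σ / α) : α < r := by
  rw [div_lt_div_iff₀ hr hα] at h
  nlinarith [mul_le_mul_of_nonneg_right hd hr.le]

lemma two_lt_specialTimeExp (hd : 0 < d) (hα : 0 < α) (hr : 0 < r) (h : d / r < 2 * σ / α) :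
    2 < specialTimeExp d σ α r := by
  rw [div_lt_div_iff₀ hr hα] at h
  rw [specialTimeExp, lt_div_iff₀ (by positivity)]
  linarith

lemma two_lt_specialSpaceExp (hα : 0 < α) (h : α < r) : 2 < specialSpaceExp α r := by
  rw [specialSpaceExp, lt_div_iff₀ (sub_pos.mpr h)]
  linarith

lemma one_div_specialTimeExp : 1 / specialTimeExp d σ α r = α * d / (4 * σ * r) :=
  one_div_div _ _

lemma one_half_sub_one_div_specialSpaceExp (hr : r ≠ 0) :
    1 / 2 - 1 / specialSpaceExp α r = α / (2 * r) := by
  rw [specialSpaceExp, one_div_div]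
  field_simp
  ring

lemma specialPair_admissible (hσ : σ ≠ 0) (hd : d ≠ 0) (hr : r ≠ 0) :
    2 * σ / specialTimeExp d σ α r + d / specialSpaceExp α r = d / 2 := by
  rw [specialTimeExp, specialSpaceExp]
  field_simp
  ring

lemma one_div_conjExp_specialTimeExp (hσ : σ ≠ 0) (hα : α ≠ 0) (ha : a ≠ 0) (hr : r ≠ 0)
    (hadm : 2 * σ / a + d / r = 2 * σ / α) (h : 1 < specialTimeExp d σ α r) :
    1 / conjExp (specialTimeExp d σ α r) = α / a + 1 / specialTimeExp d σ α r := by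
  have hαa : α / a = 1 - α * d / (2 * σ * r) := by
    field_simp at hadm ⊢
    linear_combination hadm
  rw [one_div_conjExp h, hαa, one_div_specialTimeExp]
  ring

lemma one_div_conjExp_specialSpaceExp (hr : r ≠ 0) (h : 1 < specialSpaceExp α r) :
    1 / conjExp (specialSpaceExp α r) = α / r + 1 / specialSpaceExp α r := by
  have := one_half_sub_one_div_specialSpaceExp (α := α) hr
  rw [one_div_conjExp h]
  field_simp at this ⊢
  linarith

lemma specialPair_le_iff (hσ : 0 < σ) (hα : 0 < α) (hr : 0 < r) (hd : 0 < 2 * d - 1) :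
    1 / specialTimeExp d σ α r ≤ (2 * d - 1) / 2 * (1 / 2 - 1 / specialSpaceExp α r) ↔
      d / (2 * d - 1) ≤ σ := by
  have hrhs : (2 * d - 1) / 2 * (α / (2 * r)) * (4 * σ * r) = α * (σ * (2 * d - 1)) := by
    field_simp
    ring
  rw [one_div_specialTimeExp, one_half_sub_one_div_specialSpaceExp hr.ne',
    div_le_iff₀ (by positivity), hrhs, mul_le_mul_iff_right₀ hα, div_le_iff₀ hd]

end SpecialPair

theorem special_L2_admissible_pair_general (d : ℕ) (hd : 2 ≤ d) (σ α : ℝ)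
    (hσ1 : (d : ℝ) / (2 * (d : ℝ) - 1) ≤ σ) (hσ2 : σ < 1)
    (hα1 : 4 * σ / (d : ℝ) < α)
    (a r : ℝ) (ha : 2 < a) (hr : 2 < r)
    (hadm : 2 * σ / a + (d : ℝ) / r = 2 * σ / α)
    (at' rt : ℝ) (hat : at' = 4 * σ * r / (α * (d : ℝ))) (hrt : rt = 2 * r / (r - α)) :
    2 < at' ∧ 2 < rt ∧
    2 * σ / at' + (d : ℝ) / rt = (d : ℝ) / 2 ∧
    max 2 (conjExp at') < at' ∧
    1 / conjExp at' = α / a + 1 / at' ∧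
    1 / conjExp rt = α / r + 1 / rt ∧
    1 / at' ≤ ((2 * (d : ℝ) - 1) / 2) * (1 / 2 - 1 / rt) ∧
    (at', rt) ≠ ((2 : ℝ), (4 * (d : ℝ) - 2) / (2 * (d : ℝ) - 3)) ∧
    (1 / at' ≤ ((2 * (d : ℝ) - 1) / 2) * (1 / 2 - 1 / rt) ↔
      (d : ℝ) / (2 * (d : ℝ) - 1) ≤ σ) := by
  change at' = specialTimeExp d σ α r at hat
  change rt = specialSpaceExp α r at hrt
  subst hat hrt
  have hd2 : (2 : ℝ) ≤ d := by exact_mod_cast hd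
  have hσ : 0 < σ := lt_of_lt_of_le (div_pos (by linarith) (by linarith)) hσ1
  have hα : 0 < α := lt_trans (by positivity) hα1
  have hr0 : 0 < r := by linarith
  have hdr := div_lt_two_mul_div_of_exotic hσ (by linarith) hadm
  have hat2 := two_lt_specialTimeExp (by linarith) hα hr0 hdr
  have hrt2 := two_lt_specialSpaceExp hα (lt_of_div_lt_two_mul_div hσ (by linarith) hα hr0 hdr)
  have key := specialPair_le_iff (d := (d : ℝ)) hσ hα hr0 (by linarith)
  refine ⟨hat2, hrt2, specialPair_admissible hσ.ne' (by positivity) hr0.ne',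
    max_lt hat2 (conjExp_lt_self hat2),
    one_div_conjExp_specialTimeExp hσ.ne' hα.ne' (by positivity) hr0.ne' hadm (by linarith),
    one_div_conjExp_specialSpaceExp hr0.ne' (by linarith), key.mpr hσ1, ?_, key⟩
  exact fun h => hat2.ne' (Prod.mk.inj h).1

/-- The special `L²`-admissible pair associated to an exotic pair (Lemma 4.10). -/
theorem special_L2_admissible_pair (d : ℕ) (hd : 2 ≤ d) (σ α : ℝ)
    (hσ1 : (d : ℝ) / (2 * (d : ℝ) - 1) ≤ σ) (hσ2 : σ < 1)
    (hα1 : 4 * σ / (d : ℝ) < α) (hα2 : α < 4 * σ / ((d : ℝ) + 1 - 2 * σ))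
    (a r : ℝ) (ha : 2 < a) (hr : 2 < r)
    (hadm : 2 * σ / a + (d : ℝ) / r = 2 * σ / α)
    (hrL : α * (α + 1) * (d : ℝ) / ((α + 2) * σ) < r)
    (at' rt : ℝ) (hat : at' = 4 * σ * r / (α * (d : ℝ))) (hrt : rt = 2 * r / (r - α)) :
    2 < at' ∧ 2 < rt ∧
    2 * σ / at' + (d : ℝ) / rt = (d : ℝ) / 2 ∧
    max 2 (conjExp at') < at' ∧
    1 / conjExp at' = α / a + 1 / at' ∧
    1 / conjExp rt = α / r + 1 / rt ∧
    1 / at' ≤ ((2 * (d : ℝ) - 1) / 2) * (1 / 2 - 1 / rt) ∧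
    (at', rt) ≠ ((2 : ℝ), (4 * (d : ℝ) - 2) / (2 * (d : ℝ) - 3)) ∧
    (1 / at' ≤ ((2 * (d : ℝ) - 1) / 2) * (1 / 2 - 1 / rt) ↔
      (d : ℝ) / (2 * (d : ℝ) - 1) ≤ σ) :=
  special_L2_admissible_pair_general d hd σ α hσ1 hσ2 hα1 a r ha hr hadm at' rt hat hrt
end

section
/- Existence of exotic Strichartz exponents (arithmetic part of Lemma 4.9 of the paper): Let d ≥ 2 be an integer, σ ∈ [d/(2d−1), 1) and α ∈ (4σ/d, 4σ/(d+1−2σ)). Then there exist real numbers 𝔞, 𝔯, 𝔟, 𝔰 ∈ (2, ∞) such that (α+1)·𝔰′ = 𝔯, (α+1)·𝔟′ = 𝔞, α/𝔯 < min{1, 2σ/d}, and 2σ/𝔞 + d/𝔯 = 2σ/α. Moreover, there exists β > 0 such that 𝔯 can be chosen as an arbitrary number in the interval (L, L + β), where L := α(α+1)d/((α+2)σ). -/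
set_option maxHeartbeats 1600000 in
/-- Existence of exotic Strichartz exponents (arithmetic part of Lemma 4.9). -/
theorem exotic_strichartz_exponents (d : ℕ) (hd : 2 ≤ d) (σ α : ℝ)
    (hσ1 : (d : ℝ) / (2 * (d : ℝ) - 1) ≤ σ) (hσ2 : σ < 1)
    (hα1 : 4 * σ / (d : ℝ) < α) (hα2 : α < 4 * σ / ((d : ℝ) + 1 - 2 * σ)) :
    (∃ a r b s : ℝ, 2 < a ∧ 2 < r ∧ 2 < b ∧ 2 < s ∧
      (α + 1) * conjExp s = r ∧ (α + 1) * conjExp b = a ∧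
      α / r < min 1 (2 * σ / (d : ℝ)) ∧
      2 * σ / a + (d : ℝ) / r = 2 * σ / α) ∧
    (∃ β : ℝ, 0 < β ∧
      ∀ r : ℝ, α * (α + 1) * (d : ℝ) / ((α + 2) * σ) < r →
        r < α * (α + 1) * (d : ℝ) / ((α + 2) * σ) + β →
        ∃ a b s : ℝ, 2 < a ∧ 2 < r ∧ 2 < b ∧ 2 < s ∧
          (α + 1) * conjExp s = r ∧ (α + 1) * conjExp b = a ∧
          α / r < min 1 (2 * σ / (d : ℝ)) ∧
          2 * σ / a + (d : ℝ) / r = 2 * σ / α) := by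
  have hdR : (2:ℝ) ≤ (d:ℝ) := by exact_mod_cast hd
  have hd0 : (0:ℝ) < (d:ℝ) := by linarith
  have hσhalf : (1:ℝ)/2 < σ := by
    have h : (1:ℝ)/2 < (d:ℝ) / (2 * (d:ℝ) - 1) := by
      rw [div_lt_div_iff₀ (by norm_num) (by linarith)]
      linarith
    linarith
  have hσ0 : 0 < σ := by linarith
  have hα0 : 0 < α := lt_trans (by positivity) hα1
  have hden : 0 < (d:ℝ) + 1 - 2 * σ := by linarith
  have hαl : 4 * σ < α * (d:ℝ) := by
    rw [div_lt_iff₀ hd0] at hα1; linarith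
  have hαu : α * ((d:ℝ) + 1 - 2 * σ) < 4 * σ := by
    rw [lt_div_iff₀ hden] at hα2; linarith
  -- key polynomial inequality: (α+2)σ < αd
  have hαd : (α + 2) * σ < α * (d:ℝ) := by
    rcases le_or_gt α 2 with h | h
    · nlinarith [mul_nonneg hσ0.le (by linarith : (0:ℝ) ≤ 2 - α)]
    · nlinarith [mul_le_mul_of_nonneg_left hdR hα0.le, mul_lt_mul_of_pos_left hσ2 (by linarith : (0:ℝ) < α + 2)]
  -- αd < 2σ(α+2)
  have hαd2 : α * (d:ℝ) < 2 * σ * (α + 2) := by nlinarith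
  set L : ℝ := α * (α + 1) * (d:ℝ) / ((α + 2) * σ) with hLdef
  have hposden : (0:ℝ) < (α + 2) * σ := by positivity
  have hLs : L * ((α + 2) * σ) = α * (α + 1) * (d:ℝ) := by
    rw [hLdef]; field_simp
  have hL2 : 2 < L := by nlinarith
  have hLα1 : α + 1 < L := by nlinarith
  set c1 : ℝ := 2 * (α + 1) - L with hc1def
  set c2 : ℝ := α ^ 2 * (α + 1) * (d:ℝ) / (2 * σ * (α + 2)) with hc2def
  set c3 : ℝ := α ^ 3 * (d:ℝ) / (2 * σ * (α + 2)) with hc3def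
  have hc2s : c2 * (2 * σ * (α + 2)) = α ^ 2 * (α + 1) * (d:ℝ) := by
    rw [hc2def]; field_simp
  have hc3s : c3 * (2 * σ * (α + 2)) = α ^ 3 * (d:ℝ) := by
    rw [hc3def]; field_simp
  have hc1 : 0 < c1 := by nlinarith
  have hc2 : 0 < c2 := by
    rw [hc2def]; positivity
  have hc3 : 0 < c3 := by
    rw [hc3def]; positivity
  set β : ℝ := min c1 (min c2 c3) with hβdef
  have hβ : 0 < β := lt_min hc1 (lt_min hc2 hc3)
  have main : ∀ r : ℝ, L < r → r < L + β →
      ∃ a b s : ℝ, 2 < a ∧ 2 < r ∧ 2 < b ∧ 2 < s ∧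
        (α + 1) * conjExp s = r ∧ (α + 1) * conjExp b = a ∧
        α / r < min 1 (2 * σ / (d : ℝ)) ∧
        2 * σ / a + (d : ℝ) / r = 2 * σ / α := by
    intro r hrl hru
    have hr0 : 0 < r := by linarith
    have hrc1 : r < 2 * (α + 1) := by
      have := min_le_left c1 (min c2 c3)
      rw [← hβdef] at this
      simp only [hc1def] at this
      linarith
    have hrc2' : r < L + c2 := by
      have h1 := min_le_left c2 c3
      have h2 := min_le_right c1 (min c2 c3)
      rw [← hβdef] at h2
      linarith
    have hrc3' : r < L + c3 := by
      have h1 := min_le_right c2 c3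
      have h2 := min_le_right c1 (min c2 c3)
      rw [← hβdef] at h2
      linarith
    have hLr : α * (α + 1) * (d:ℝ) < r * ((α + 2) * σ) := by
      have h := mul_lt_mul_of_pos_right hrl hposden
      linarith [hLs]
    -- 2σr < αd(α+1)
    have hrc2 : 2 * σ * r < α * (d:ℝ) * (α + 1) := by
      have h := mul_lt_mul_of_pos_right hrc2' (show (0:ℝ) < 2 * σ * (α + 2) by positivity)
      have h2 : (2 * σ * r) * (α + 2) < (α * (d:ℝ) * (α + 1)) * (α + 2) := by
        linarith [h, hLs, hc2s]
      exact lt_of_mul_lt_mul_right h2 (by linarith)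
    -- D := 2σr - αd > 0
    have hD : 0 < 2 * σ * r - α * (d:ℝ) := by
      have h2 : (α * (d:ℝ)) * (α + 2) < (2 * σ * r) * (α + 2) := by
        linarith [hLr, mul_nonneg (mul_nonneg hα0.le hd0.le) hα0.le]
      linarith [lt_of_mul_lt_mul_right h2 (by linarith : (0:ℝ) ≤ α + 2)]
    have hr2 : 2 < r := by linarith
    have hrα1 : α + 1 < r := by linarith
    set a : ℝ := 2 * σ * α * r / (2 * σ * r - α * (d:ℝ)) with hadef
    have ha2 : 2 < a := by
      rw [hadef, lt_div_iff₀ hD]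
      rcases le_or_gt 2 α with h | h
      · linarith [mul_le_mul_of_nonneg_right h (mul_pos hσ0 hr0).le, mul_pos hα0 hd0]
      · have hpos2 : (0:ℝ) < 2 - α := by linarith
        have h5 : r * (2 * σ * (α + 2)) < 2 * (α * (α + 1) * (d:ℝ)) + α ^ 3 * (d:ℝ) := by
          have h := mul_lt_mul_of_pos_right hrc3' (show (0:ℝ) < 2 * σ * (α + 2) by positivity)
          linarith [hLs, hc3s, h]
        have h6 := mul_lt_mul_of_pos_left h5 hpos2
        have h7 : (2 * (2 * σ * r - α * (d:ℝ))) * (α + 2) < (2 * σ * α * r) * (α + 2) := by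
          linarith [h6, mul_pos (pow_pos hα0 4) hd0]
        exact lt_of_mul_lt_mul_right h7 (by linarith)
    have haub : a < 2 * (α + 1) := by
      rw [hadef, div_lt_iff₀ hD]
      linarith [hLr]
    have halb : α + 1 < a := by
      rw [hadef, lt_div_iff₀ hD]
      linarith [hrc2]
    have hane : (2 * σ * r - α * (d:ℝ)) ≠ 0 := ne_of_gt hD
    have hbd : 0 < a - (α + 1) := by linarith
    have hsd : 0 < r - (α + 1) := by linarith
    refine ⟨a, a / (a - (α + 1)), r / (r - (α + 1)), ha2, hr2, ?_, ?_, ?_, ?_, ?_, ?_⟩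
    · rw [lt_div_iff₀ hbd]; linarith
    · rw [lt_div_iff₀ hsd]; linarith
    · unfold conjExp
      have hne : r - (α + 1) ≠ 0 := ne_of_gt hsd
      have h1 : r / (r - (α + 1)) - 1 = (α + 1) / (r - (α + 1)) := by
        rw [div_sub_one hne]; ring_nf
      rw [h1]
      have hα1ne : α + 1 ≠ 0 := by positivity
      field_simp
    · unfold conjExp
      have hne : a - (α + 1) ≠ 0 := ne_of_gt hbd
      have h1 : a / (a - (α + 1)) - 1 = (α + 1) / (a - (α + 1)) := by
        rw [div_sub_one hne]; ring_nf
      rw [h1]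
      have hα1ne : α + 1 ≠ 0 := by positivity
      field_simp
    · refine lt_min ?_ ?_
      · rw [div_lt_one hr0]; linarith
      · rw [div_lt_div_iff₀ hr0 hd0]; linarith
    · rw [hadef]
      have hαne : α ≠ 0 := ne_of_gt hα0
      have hrne : r ≠ 0 := ne_of_gt hr0
      field_simp
      ring
  constructor
  · obtain ⟨a, b, s, h1, h2, h3, h4, h5, h6, h7, h8⟩ :=
      main (L + β/2) (by linarith) (by linarith)
    exact ⟨a, L + β/2, b, s, h1, h2, h3, h4, h5, h6, h7, h8⟩
  · exact ⟨β, hβ, main⟩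
end
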